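/- Let u ∈ Σ* and Γ ⊆ Σ. The iterated shuffle of perm(u) ⧢ Γ* is regular if and only if u ∈ a⁺ for some letter a ∈ Σ, or u ∈ Γ*, or u = ε. -/

import Mathlib

/-- `IsShuffle u v w` means `w` is an interleaving (shuffle) of `u` and `v`,
i.e. `w = x₁y₁⋯xₙyₙ` with `u = x₁⋯xₙ` and `v = y₁⋯yₙ`. -/
inductive IsShuffle {α : Type*} : List α → List α → List α → Prop
  | nil : IsShuffle [] [] []
  | left {a : α} {u v w : List α} : IsShuffle u v w → IsShuffle (a :: u) v (a :: w)
  | right {a : α} {u v w : List α} : IsShuffle u v w → IsShuffle u (a :: v) (a :: w)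

/-- Shuffle of two languages: `U ⧢ V = ⋃_{x∈U, y∈V} (x ⧢ y)`. -/
def Language.shuffle {α : Type*} (U V : Language α) : Language α :=
  { w | ∃ u ∈ U, ∃ v ∈ V, IsShuffle u v w }

/-- The `n`-fold shuffle of a language with itself (`0`-fold is `{ε}`). -/
def Language.shufflePow {α : Type*} (L : Language α) : ℕ → Language α
  | 0 => 1
  | n + 1 => (L.shufflePow n).shuffle L

/-- Iterated shuffle (shuffle closure): `L^{⧢,*} = ⋃_{n ≥ 0} L^{⧢,n}`. -/
def Language.shuffleStar {α : Type*} (L : Language α) : Language α :=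
  { w | ∃ n, w ∈ L.shufflePow n }

/-- Commutative (permutation) closure: all words with the same letter counts
as some word of `L`. -/
def Language.perm {α : Type*} [DecidableEq α] (L : Language α) : Language α :=
  { u | ∃ w ∈ L, ∀ a : α, u.count a = w.count a }


/-!
The shuffle powers of `perm(u) ⧢ Γ*` are described by letter counts: a nonempty word `w` lies
in the iterated shuffle iff for some `n ≥ 1` it contains every letter `a` at least `n·|u|_a`
times, and exactly that often when `a ∉ Γ`. If `u ∈ Γ*` this reduces to `n = 1`, so only
counts truncated at `|u| + 1` matter; if `u = aᵏ` with `a ∉ Γ` it reduces to `|w|_a ∈ kℕ⁺`.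
In both cases membership only depends on counts modulo some `m` and truncated at some `B`,
which gives a regular language by Myhill–Nerode. Otherwise pick `c ∈ u` outside `Γ` and a
second letter `d` of `u`, and let `v` be `u` with its `c`'s erased: `vⁱ` completes
`c^{i·|u|_c}` into the iterated shuffle but not `c^{j·|u|_c}` for `j > i`, so there are
infinitely many left quotients.
-/

section ShuffleStarRegularity

open List

variable {α : Type*}

namespace IsShuffle

theorem symm {x y w : List α} (h : IsShuffle x y w) : IsShuffle y x w := by
  induction h with
  | nil => exact .nil
  | left _ ih => exact .right ih
  | right _ ih => exact .left ih

theorem count_eq [DecidableEq α] {x y w : List α} (h : IsShuffle x y w) (a : α) :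
    w.count a = x.count a + y.count a := by
  induction h with
  | nil => rfl
  | left _ ih => simp only [count_cons, ih]; omega
  | right _ ih => simp only [count_cons, ih]; omega

end IsShuffle

theorem isShuffle_nil_left_iff {v w : List α} : IsShuffle [] v w ↔ v = w := by
  constructor
  · intro h
    induction w generalizing v with
    | nil => cases h; rfl
    | cons a w ih => cases h with
      | right h => rw [ih h]
  · rintro rfl
    induction v with
    | nil => exact .nil
    | cons a v ih => exact .right ih

theorem List.Sublist.exists_isShuffle {x w : List α} (h : x <+ w) : ∃ y, IsShuffle x y w := by
  induction h with
  | slnil => exact ⟨[], .nil⟩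
  | cons a _ ih => obtain ⟨y, hy⟩ := ih; exact ⟨a :: y, .right hy⟩
  | cons_cons a _ ih => obtain ⟨y, hy⟩ := ih; exact ⟨y, .left hy⟩

theorem List.Subperm.exists_isShuffle {u w : List α} (h : u <+~ w) :
    ∃ x y, x ~ u ∧ IsShuffle x y w := by
  obtain ⟨x, hxu, hxw⟩ := h
  obtain ⟨y, hy⟩ := hxw.exists_isShuffle
  exact ⟨x, y, hxu, hy⟩

namespace Language

theorem one_shuffle (L : Language α) : (1 : Language α).shuffle L = L := by
  ext w
  simp only [shuffle, mem_one, exists_eq_left, isShuffle_nil_left_iff, exists_eq_right]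
  rfl

theorem shufflePow_one (L : Language α) : L.shufflePow 1 = L :=
  one_shuffle L

end Language

variable [DecidableEq α]

theorem List.count_filter_ne (u : List α) (b c : α) :
    (u.filter (· ≠ c)).count b = if b = c then 0 else u.count b := by
  split_ifs with hb
  · exact count_eq_zero.2 (by simp [hb])
  · exact count_filter (by simpa using hb)

section CountModCap

def countModCap (m B : ℕ) (w : List α) (a : α) : ℕ × ℕ :=
  (w.count a % m, min (w.count a) B)

variable {m B : ℕ} {w w' : List α}

theorem count_modEq_of_countModCap_eq (h : countModCap m B w = countModCap m B w') (a : α) :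
    w.count a ≡ w'.count a [MOD m] :=
  congrArg Prod.fst (congrFun h a)

theorem min_count_eq_of_countModCap_eq (h : countModCap m B w = countModCap m B w') (a : α) :
    min (w.count a) B = min (w'.count a) B :=
  congrArg Prod.snd (congrFun h a)

theorem eq_nil_of_countModCap_eq (hB : 0 < B) (h : countModCap m B [] = countModCap m B w) :
    w = [] :=
  eq_nil_iff_forall_not_mem.2 fun a ha => by
    have := min_count_eq_of_countModCap_eq h a
    have := count_pos_iff.2 ha
    rw [count_nil] at *
    omega

theorem countModCap_append_right (h : countModCap m B w = countModCap m B w') (v : List α) :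
    countModCap m B (w ++ v) = countModCap m B (w' ++ v) := by
  funext a
  have hmin := min_count_eq_of_countModCap_eq h a
  simp only [countModCap, count_append, Prod.mk.injEq]
  exact ⟨(count_modEq_of_countModCap_eq h a).add_right _, by omega⟩

theorem finite_range_countModCap [Finite α] (hm : 0 < m) :
    (Set.range (countModCap (α := α) m B)).Finite := by
  refine (Set.Finite.pi' fun _ => (Set.finite_Iio m).prod (Set.finite_Iic B)).subset ?_
  rintro _ ⟨w, rfl⟩ a
  exact ⟨Nat.mod_lt _ hm, min_le_right (w.count a) B⟩

/-- Myhill–Nerode: the left quotient by `w` only depends on `countModCap m B w`. -/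
theorem Language.isRegular_of_countModCap [Finite α] (hm : 0 < m) {L : Language α}
    (hL : ∀ w w', countModCap m B w = countModCap m B w' → w ∈ L → w' ∈ L) : L.IsRegular := by
  have hfac : Function.FactorsThrough L.leftQuotient (countModCap m B) := fun w w' h => by
    ext v
    exact ⟨hL _ _ (countModCap_append_right h v), hL _ _ (countModCap_append_right h.symm v)⟩
  rw [isRegular_iff_finite_range_leftQuotient, ← hfac.extend_comp (fun _ => 0),
    Set.range_comp]
  exact (finite_range_countModCap hm).image _

end CountModCap

abbrev permShuffleGammaStar (u : List α) (Γ : Set α) : Language α :=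
  (({u} : Language α).perm).shuffle { w : List α | ∀ x ∈ w, x ∈ Γ }

/-- The letter counts of the words of `perm(uⁿ) ⧢ Γ*`. -/
def HasShuffleCounts (u : List α) (Γ : Set α) (n : ℕ) (w : List α) : Prop :=
  ∀ a, n * u.count a ≤ w.count a ∧ (a ∉ Γ → w.count a = n * u.count a)

section PermShuffleGammaStar

variable {u : List α} {Γ : Set α}

theorem hasShuffleCounts_zero_iff {y : List α} :
    HasShuffleCounts u Γ 0 y ↔ ∀ x ∈ y, x ∈ Γ := by
  simp only [HasShuffleCounts, zero_mul, zero_le, true_and, count_eq_zero]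
  exact forall_congr' fun a => not_imp_not

theorem hasShuffleCounts_one_of_count_eq {x : List α} (h : ∀ a, x.count a = u.count a) :
    HasShuffleCounts u Γ 1 x :=
  fun a => by simp [h a]

theorem HasShuffleCounts.of_isShuffle {m n : ℕ} {x y w : List α}
    (hx : HasShuffleCounts u Γ m x) (hy : HasShuffleCounts u Γ n y) (h : IsShuffle x y w) :
    HasShuffleCounts u Γ (m + n) w := by
  intro a
  obtain ⟨hxa, hxa'⟩ := hx a
  obtain ⟨hya, hya'⟩ := hy a
  rw [h.count_eq, add_mul]
  exact ⟨by omega, fun ha => by rw [hxa' ha, hya' ha]⟩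

theorem HasShuffleCounts.exists_isShuffle {n : ℕ} {w : List α}
    (h : HasShuffleCounts u Γ (n + 1) w) :
    ∃ x y, x ~ u ∧ IsShuffle x y w ∧ HasShuffleCounts u Γ n y := by
  have hsub : u <+~ w := subperm_ext_iff.2 fun a _ => by
    have := (h a).1
    rw [add_one_mul] at this
    omega
  obtain ⟨x, y, hxu, hs⟩ := hsub.exists_isShuffle
  refine ⟨x, y, hxu, hs, fun a => ?_⟩
  obtain ⟨hwa, hwa'⟩ := h a
  rw [hs.count_eq, hxu.count_eq, add_one_mul] at hwa hwa'
  exact ⟨by omega, fun ha => by have := hwa' ha; omega⟩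

theorem mem_permShuffleGammaStar_iff {w : List α} :
    w ∈ permShuffleGammaStar u Γ ↔ HasShuffleCounts u Γ 1 w := by
  constructor
  · rintro ⟨x, ⟨_, rfl, hx⟩, y, hy, hs⟩
    exact (hasShuffleCounts_one_of_count_eq hx).of_isShuffle (hasShuffleCounts_zero_iff.2 hy) hs
  · intro h
    obtain ⟨x, y, hxu, hs, hy⟩ := h.exists_isShuffle
    exact ⟨x, ⟨u, rfl, hxu.count_eq⟩, y, hasShuffleCounts_zero_iff.1 hy, hs⟩

theorem mem_shufflePow_succ_iff {n : ℕ} {w : List α} :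
    w ∈ (permShuffleGammaStar u Γ).shufflePow (n + 1) ↔ HasShuffleCounts u Γ (n + 1) w := by
  induction n generalizing w with
  | zero => rw [Language.shufflePow_one, mem_permShuffleGammaStar_iff]
  | succ n ih =>
    constructor
    · rintro ⟨y, hy, x, hx, hs⟩
      exact (ih.1 hy).of_isShuffle (mem_permShuffleGammaStar_iff.1 hx) hs
    · intro h
      obtain ⟨x, y, hxu, hs, hy⟩ := h.exists_isShuffle
      have hx : x ∈ permShuffleGammaStar u Γ :=
        mem_permShuffleGammaStar_iff.2 (hasShuffleCounts_one_of_count_eq hxu.count_eq)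
      exact ⟨y, ih.2 hy, x, hx, hs.symm⟩

theorem mem_shuffleStar_iff {w : List α} :
    w ∈ (permShuffleGammaStar u Γ).shuffleStar ↔
      w = [] ∨ ∃ n, HasShuffleCounts u Γ (n + 1) w := by
  constructor
  · rintro ⟨_ | n, hn⟩
    · exact .inl hn
    · exact .inr ⟨n, mem_shufflePow_succ_iff.1 hn⟩
  · rintro (rfl | ⟨n, hn⟩)
    · exact ⟨0, rfl⟩
    · exact ⟨n + 1, mem_shufflePow_succ_iff.2 hn⟩

theorem mem_shuffleStar_of_count_eq_mul {n : ℕ} {w : List α}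
    (h : ∀ a, w.count a = n * u.count a) : w ∈ (permShuffleGammaStar u Γ).shuffleStar := by
  rw [mem_shuffleStar_iff]
  cases n with
  | zero => exact .inl (eq_nil_iff_forall_not_mem.2 fun a => count_eq_zero.1 (by simp [h a]))
  | succ n => exact .inr ⟨n, fun a => ⟨(h a).ge, fun _ => h a⟩⟩

theorem mul_count_le_of_mem_shuffleStar {c : α} {n : ℕ} {w : List α}
    (hw : w ∈ (permShuffleGammaStar u Γ).shuffleStar) (hcΓ : c ∉ Γ) (hcu : c ∈ u)
    (hn : w.count c = n * u.count c) (b : α) : n * u.count b ≤ w.count b := by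
  have hc : 0 < u.count c := count_pos_iff.2 hcu
  rcases mem_shuffleStar_iff.1 hw with rfl | ⟨k, hk⟩
  · obtain rfl : n = 0 := by simpa [hc.ne'] using hn.symm
    simp
  · have : n = k + 1 := Nat.eq_of_mul_eq_mul_right hc (hn.symm.trans ((hk c).2 hcΓ))
    exact this ▸ (hk b).1

theorem isRegular_shuffleStar_of_forall_mem [Finite α] (hu : ∀ x ∈ u, x ∈ Γ) :
    (permShuffleGammaStar u Γ).shuffleStar.IsRegular := by
  have hΓ : ∀ a ∉ Γ, u.count a = 0 := fun a ha => count_eq_zero.2 fun h => ha (hu a h)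
  refine Language.isRegular_of_countModCap (B := u.length + 1) one_pos fun w w' h hw => ?_
  rw [mem_shuffleStar_iff] at hw ⊢
  rcases hw with rfl | ⟨n, hn⟩
  · exact .inl (eq_nil_of_countModCap_eq (Nat.succ_pos _) h)
  · refine .inr ⟨0, fun a => ⟨?_, fun ha => ?_⟩⟩
    · have hmin := min_count_eq_of_countModCap_eq h a
      have := (hn a).1
      have := u.count_le_length (a := a)
      have : u.count a ≤ (n + 1) * u.count a := Nat.le_mul_of_pos_left _ n.succ_pos
      omega
    · have hmin := min_count_eq_of_countModCap_eq h a
      have := (hn a).2 ha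
      rw [hΓ a ha, mul_zero] at *
      omega

theorem isRegular_shuffleStar_of_forall_eq [Finite α] {a : α} (hu : u ≠ [])
    (ha : ∀ x ∈ u, x = a) (haΓ : a ∉ Γ) :
    (permShuffleGammaStar u Γ).shuffleStar.IsRegular := by
  have hua : u.count a = u.length := count_eq_length.2 fun x hx => (ha x hx).symm
  have hub : ∀ b ≠ a, u.count b = 0 := fun b hb => count_eq_zero.2 fun h => hb (ha b h)
  refine Language.isRegular_of_countModCap (B := 1) (length_pos_iff.2 hu) fun w w' h hw => ?_
  rw [mem_shuffleStar_iff] at hw ⊢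
  rcases hw with rfl | ⟨n, hn⟩
  · exact .inl (eq_nil_of_countModCap_eq one_pos h)
  · have hwa : w.count a = (n + 1) * u.length := hua ▸ (hn a).2 haΓ
    have hpos : 0 < w'.count a := by
      have := min_count_eq_of_countModCap_eq h a
      have := Nat.le_mul_of_pos_right (n + 1) (length_pos_iff.2 hu)
      omega
    obtain ⟨k, hk⟩ : u.length ∣ w'.count a := Nat.modEq_zero_iff_dvd.1 <|
      (count_modEq_of_countModCap_eq h a).symm.trans
        (Nat.modEq_zero_iff_dvd.2 (hwa ▸ dvd_mul_left _ _))
    obtain ⟨n', rfl⟩ : ∃ n', k = n' + 1 := Nat.exists_eq_succ_of_ne_zero (by rintro rfl; omega)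
    refine .inr ⟨n', fun b => ?_⟩
    by_cases hba : b = a
    · subst hba
      rw [hua, hk, mul_comm]
      exact ⟨le_rfl, fun _ => rfl⟩
    · rw [hub b hba, mul_zero]
      refine ⟨Nat.zero_le _, fun hb => ?_⟩
      have := min_count_eq_of_countModCap_eq h b
      have := (hn b).2 hb
      rw [hub b hba, mul_zero] at this
      omega

theorem not_isRegular_shuffleStar {c d : α} (hcu : c ∈ u) (hcΓ : c ∉ Γ) (hdu : d ∈ u)
    (hdc : d ≠ c) : ¬(permShuffleGammaStar u Γ).shuffleStar.IsRegular := by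
  set L := (permShuffleGammaStar u Γ).shuffleStar
  let pre : ℕ → List α := fun i => replicate (i * u.count c) c
  let suf : ℕ → List α := fun j => (replicate j (u.filter (· ≠ c))).flatten
  have hcount : ∀ i j b,
      (pre i ++ suf j).count b = if b = c then i * u.count c else j * u.count b := by
    intro i j b
    simp only [pre, suf, count_append, count_replicate, count_flatten, map_replicate,
      sum_replicate, smul_eq_mul, count_filter_ne]
    split_ifs <;> simp_all
  have hmem : ∀ i, suf i ∈ L.leftQuotient (pre i) := fun i =>
    mem_shuffleStar_of_count_eq_mul (n := i) fun b => by
      rw [hcount]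
      split_ifs with hb <;> simp [hb]
  have hnot : ∀ i j, i < j → suf i ∉ L.leftQuotient (pre j) := fun i j hij hj => by
    have := mul_count_le_of_mem_shuffleStar hj hcΓ hcu (n := j) (by rw [hcount, if_pos rfl]) d
    rw [hcount, if_neg hdc] at this
    have := Nat.le_of_mul_le_mul_right this (count_pos_iff.2 hdu)
    omega
  have hinj : Function.Injective (L.leftQuotient ∘ pre) :=
    .of_lt_imp_ne fun i j hij heq => hnot i j hij ((Set.ext_iff.1 heq (suf i)).1 (hmem i))
  rw [Language.isRegular_iff_finite_range_leftQuotient]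
  exact (Set.infinite_range_of_injective hinj).mono (Set.range_comp_subset_range _ _)

end PermShuffleGammaStar

end ShuffleStarRegularity

theorem shuffleStar_perm_shuffle_gammaStar_regular_iff_general {α : Type*} [Fintype α]
    [DecidableEq α] (u : List α) (Γ : Set α) :
    ((({u} : Language α).perm).shuffle
        { w : List α | ∀ x ∈ w, x ∈ Γ }).shuffleStar.IsRegular ↔
      (∃ a : α, u ≠ [] ∧ ∀ x ∈ u, x = a) ∨ (∀ x ∈ u, x ∈ Γ) ∨ u = [] := by
  constructor
  · intro hreg
    by_contra! h
    obtain ⟨hpow, ⟨c, hcu, hcΓ⟩, -⟩ := h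
    obtain ⟨d, hdu, hdc⟩ := hpow c (List.ne_nil_of_mem hcu)
    exact not_isRegular_shuffleStar hcu hcΓ hdu hdc hreg
  · rintro (⟨a, hne, ha⟩ | hΓ | rfl)
    · by_cases haΓ : a ∈ Γ
      · exact isRegular_shuffleStar_of_forall_mem fun x hx => ha x hx ▸ haΓ
      · exact isRegular_shuffleStar_of_forall_eq hne ha haΓ
    · exact isRegular_shuffleStar_of_forall_mem hΓ
    · exact isRegular_shuffleStar_of_forall_mem (by simp)

theorem shuffleStar_perm_shuffle_gammaStar_regular_iff {α : Type*} [Fintype α]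
    [DecidableEq α] (u : List α) (Γ : Set α) [DecidablePred (· ∈ Γ)] :
    ((({u} : Language α).perm).shuffle
        { w : List α | ∀ x ∈ w, x ∈ Γ }).shuffleStar.IsRegular ↔
      (∃ a : α, u ≠ [] ∧ ∀ x ∈ u, x = a) ∨ (∀ x ∈ u, x ∈ Γ) ∨ u = [] :=
  shuffleStar_perm_shuffle_gammaStar_regular_iff_general u Γ
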